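/- arXiv:1408.1443 — 5 statements merged into one kernel-verified Lean document; each statement's English description precedes it below -/
import Mathlib

section
/- Let X be a Banach lattice which is an abstract L1 space (i.e., ‖x+y‖ = ‖x‖ + ‖y‖ whenever |x| ∧ |y| = 0), let N be a natural number, and let δ > 0. If x_1, …, x_N are unit vectors in X with ‖|x_n| ∧ |x_m|‖ < δ for all 1 ≤ n < m ≤ N, then the vectors y_n := (|x_n| − |x_n| ∧ (⋁_{m ≠ n} |x_m|)) · sign(x_n) are pairwise disjoint (|y_n| ∧ |y_m| = 0 for n ≠ m) and each satisfies ‖y_n‖ ≥ 1 − N·δ. -/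
/-!
Write `s n = ⋁_{m ≠ n} |x m|`. Then `|y n| ≤ (|x n| - s n)⁺`, and since `|x m| ≤ s n` and
`|x n| ≤ s m` for `m ≠ n`, we get `|x n| - s n ≤ -(|x m| - s m)`, so the positive parts
`(|x m| - s m)⁺` and `(|x n| - s n)⁺` are disjoint. For the norm, `|x n - y n| ≤ |x n| ⊓ s n`,
and distributivity of the lattice gives `|x n| ⊓ s n ≤ ∑_{m ≠ n} |x n| ⊓ |x m|`, an element of
norm at most `(N - 1) δ`; the triangle inequality concludes.
-/

open Finset

lemma inf_eq_zero_of_le_of_le {α : Type*} [SemilatticeInf α] [Zero α] {a b c d : α} (ha : 0 ≤ a)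
    (hb : 0 ≤ b) (hac : a ≤ c) (hbd : b ≤ d) (hcd : c ⊓ d = 0) : a ⊓ b = 0 :=
  le_antisymm (hcd ▸ inf_le_inf hac hbd) (le_inf ha hb)

section LatticeOrderedGroup

variable {α : Type*} [Lattice α] [AddCommGroup α] [AddLeftMono α]

lemma abs_sub_eq_sup_of_inf_eq_zero {a b : α} (h : a ⊓ b = 0) : |a - b| = a ⊔ b := by
  rw [← sup_sub_inf_eq_abs_sub, inf_comm, h, sub_zero, sup_comm]

lemma posPart_le_abs (a : α) : a⁺ ≤ |a| := sup_le (le_abs_self a) (abs_nonneg a)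

lemma negPart_le_abs (a : α) : a⁻ ≤ |a| := sup_le (neg_le_abs a) (abs_nonneg a)

lemma sub_inf_self_eq_posPart (a s : α) : a - a ⊓ s = (a - s)⁺ := by
  rw [sub_inf, sub_self, sup_comm]
  rfl

lemma posPart_sub_le_self {a s : α} (ha : 0 ≤ a) (hs : 0 ≤ s) : (a - s)⁺ ≤ a :=
  sup_le (sub_le_self a hs) ha

lemma posPart_sub_inf_posPart_sub_eq_zero {u v s t : α} (hu : u ≤ t) (hv : v ≤ s) :
    (u - s)⁺ ⊓ (v - t)⁺ = 0 := by
  have hneg : (v - t)⁺ ≤ (u - s)⁻ := by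
    rw [← posPart_neg, neg_sub]
    exact posPart_mono (sub_le_sub hv hu)
  exact inf_eq_zero_of_le_of_le (posPart_nonneg _) (posPart_nonneg _) le_rfl hneg
    (posPart_inf_negPart_eq_zero _)

/-- `(|a| - |a| ⊓ s) · sign a`, written in lattice terms. -/
def signedTruncation (s a : α) : α := (a⁺ - a⁺ ⊓ s) - (a⁻ - a⁻ ⊓ s)

variable {s : α}

lemma abs_signedTruncation_le (hs : 0 ≤ s) (a : α) : |signedTruncation s a| ≤ (|a| - s)⁺ := by
  have hdisj : (a⁺ - s)⁺ ⊓ (a⁻ - s)⁺ = 0 :=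
    inf_eq_zero_of_le_of_le (posPart_nonneg _) (posPart_nonneg _)
      (posPart_sub_le_self (posPart_nonneg a) hs) (posPart_sub_le_self (negPart_nonneg a) hs)
      (posPart_inf_negPart_eq_zero a)
  rw [signedTruncation, sub_inf_self_eq_posPart, sub_inf_self_eq_posPart,
    abs_sub_eq_sup_of_inf_eq_zero hdisj]
  exact sup_le (posPart_mono (sub_le_sub_right (posPart_le_abs a) s))
    (posPart_mono (sub_le_sub_right (negPart_le_abs a) s))

lemma abs_sub_signedTruncation_le (hs : 0 ≤ s) (a : α) : |a - signedTruncation s a| ≤ |a| ⊓ s := by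
  have hdisj : (a⁺ ⊓ s) ⊓ (a⁻ ⊓ s) = 0 :=
    inf_eq_zero_of_le_of_le (le_inf (posPart_nonneg a) hs) (le_inf (negPart_nonneg a) hs)
      inf_le_left inf_le_left (posPart_inf_negPart_eq_zero a)
  have hdiff : a - signedTruncation s a = a⁺ ⊓ s - a⁻ ⊓ s := by
    nth_rewrite 1 [← posPart_sub_negPart a]
    rw [signedTruncation]
    abel
  rw [hdiff, abs_sub_eq_sup_of_inf_eq_zero hdisj]
  exact sup_le (inf_le_inf_right s (posPart_le_abs a)) (inf_le_inf_right s (negPart_le_abs a))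

lemma abs_signedTruncation_inf_abs_signedTruncation_eq_zero {t a b : α} (hs : 0 ≤ s) (ht : 0 ≤ t)
    (ha : |a| ≤ t) (hb : |b| ≤ s) : |signedTruncation s a| ⊓ |signedTruncation t b| = 0 :=
  inf_eq_zero_of_le_of_le (abs_nonneg _) (abs_nonneg _) (abs_signedTruncation_le hs a)
    (abs_signedTruncation_le ht b) (posPart_sub_inf_posPart_sub_eq_zero ha hb)

end LatticeOrderedGroup

namespace Finset

variable {ι : Type*}

lemma le_fold_sup {β : Type*} [SemilatticeSup β] (S : Finset ι) (b : β)
    (f : ι → β) : b ≤ S.fold ((· ⊔ ·) : β → β → β) b f := by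
  induction S using Finset.cons_induction with
  | empty => exact le_rfl
  | cons i S hi ih =>
    rw [fold_cons]
    exact le_sup_of_le_right ih

lemma le_fold_sup_of_mem {β : Type*} [SemilatticeSup β] {S : Finset ι} {i : ι}
    (hi : i ∈ S) (b : β) (f : ι → β) : f i ≤ S.fold ((· ⊔ ·) : β → β → β) b f := by
  classical
  rw [← insert_eq_of_mem hi, fold_insert_idem]
  exact le_sup_left

lemma inf_fold_sup_le_sum {α : Type*} [Lattice α] [AddCommGroup α] [AddLeftMono α]
    {a : α} (ha : 0 ≤ a) {f : ι → α} (hf : ∀ i, 0 ≤ f i) (S : Finset ι) :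
    a ⊓ S.fold ((· ⊔ ·) : α → α → α) 0 f ≤ ∑ i ∈ S, a ⊓ f i := by
  classical
  let := AddCommGroup.toDistribLattice α
  induction S using Finset.induction_on with
  | empty => simp [ha]
  | insert i S hi ih =>
    rw [fold_insert hi, sum_insert hi, inf_sup_left]
    have hfold : 0 ≤ a ⊓ S.fold ((· ⊔ ·) : α → α → α) 0 f := le_inf ha (le_fold_sup S 0 f)
    exact sup_le (le_add_of_nonneg_right (hfold.trans ih))
      ((le_add_of_nonneg_left (le_inf ha (hf i))).trans (add_le_add_right ih _))

end Finset

theorem stmt0_general (X : Type*) [NormedAddCommGroup X] [Lattice X] [HasSolidNorm X] [IsOrderedAddMonoid X]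
    (N : ℕ) (δ : ℝ) (hδ : 0 < δ) (x : Fin N → X)
    (hunit : ∀ n, ‖x n‖ = 1)
    (hεdisj : ∀ m n : Fin N, m ≠ n → ‖|x m| ⊓ |x n|‖ < δ)
    (s y : Fin N → X)
    (hs : ∀ n, s n = (Finset.univ.erase n).fold ((· ⊔ ·) : X → X → X) 0 (fun m => |x m|))
    (hy : ∀ n, y n = ((x n ⊔ 0) - (x n ⊔ 0) ⊓ s n) - (((-x n) ⊔ 0) - ((-x n) ⊔ 0) ⊓ s n)) :
    (∀ m n : Fin N, m ≠ n → |y m| ⊓ |y n| = 0) ∧ ∀ n, 1 - N * δ ≤ ‖y n‖ := by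
  have hy' : ∀ n, y n = signedTruncation (s n) (x n) := hy
  have hs0 : ∀ n, 0 ≤ s n := fun n => hs n ▸ le_fold_sup _ _ _
  have hxs : ∀ m n, m ≠ n → |x m| ≤ s n := fun m n hmn =>
    hs n ▸ le_fold_sup_of_mem (mem_erase.2 ⟨hmn, mem_univ m⟩) 0 fun m => |x m|
  refine ⟨fun m n hmn => ?_, fun n => ?_⟩
  · rw [hy' m, hy' n]
    exact abs_signedTruncation_inf_abs_signedTruncation_eq_zero (hs0 m) (hs0 n) (hxs m n hmn)
      (hxs n m hmn.symm)
  have hoverlap : |x n| ⊓ s n ≤ ∑ m ∈ univ.erase n, |x n| ⊓ |x m| :=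
    hs n ▸ inf_fold_sup_le_sum (abs_nonneg _) (fun m => abs_nonneg _) _
  have hclose : ‖x n - y n‖ ≤ N * δ :=
    calc ‖x n - y n‖ ≤ ‖∑ m ∈ univ.erase n, |x n| ⊓ |x m|‖ :=
          norm_le_norm_of_abs_le_abs <| (hy' n ▸ abs_sub_signedTruncation_le (hs0 n) (x n)).trans
            (hoverlap.trans (le_abs_self _))
      _ ≤ ∑ m ∈ univ.erase n, δ :=
          norm_sum_le_of_le _ fun m hm => (hεdisj n m (ne_of_mem_erase hm).symm).le
      _ ≤ N * δ := by
          rw [sum_const, nsmul_eq_mul]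
          exact mul_le_mul_of_nonneg_right (by simp) hδ.le
  linarith [norm_sub_norm_le (x n) (y n), hunit n]

/-- In an abstract L1 space (a Banach lattice where norms of disjoint elements add),
`ε`-disjoint unit vectors can be replaced by genuinely disjoint vectors
`y n = (|x n| - |x n| ⊓ ⋁_{m ≠ n} |x m|) · sign (x n)`, the latter expressed in lattice
terms as `((x n ⊔ 0) - (x n ⊔ 0) ⊓ s n) - (((-x n) ⊔ 0) - ((-x n) ⊔ 0) ⊓ s n)` where
`s n = ⋁_{m ≠ n} |x m|`, and each `y n` has norm at least `1 - N·δ`. -/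
theorem stmt0 (X : Type*) [NormedAddCommGroup X] [Lattice X] [HasSolidNorm X] [IsOrderedAddMonoid X] [CompleteSpace X]
    (habstractL1 : ∀ x y : X, |x| ⊓ |y| = 0 → ‖x + y‖ = ‖x‖ + ‖y‖)
    (N : ℕ) (δ : ℝ) (hδ : 0 < δ) (x : Fin N → X)
    (hunit : ∀ n, ‖x n‖ = 1)
    (hεdisj : ∀ m n : Fin N, m ≠ n → ‖|x m| ⊓ |x n|‖ < δ)
    (s y : Fin N → X)
    (hs : ∀ n, s n = (Finset.univ.erase n).fold ((· ⊔ ·) : X → X → X) 0 (fun m => |x m|))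
    (hy : ∀ n, y n = ((x n ⊔ 0) - (x n ⊔ 0) ⊓ s n) - (((-x n) ⊔ 0) - ((-x n) ⊔ 0) ⊓ s n)) :
    (∀ m n : Fin N, m ≠ n → |y m| ⊓ |y n| = 0) ∧ ∀ n, 1 - N * δ ≤ ‖y n‖ :=
  stmt0_general X N δ hδ x hunit hεdisj s y hs hy
end

section
/- Let X be an L1(μ) space, Y a Banach space, T : X → Y a bounded operator, r > 0, N a natural number, and ε > 0. Suppose that for every N-tuple of pairwise disjoint unit vectors x_1, …, x_N in X one has max_{1 ≤ n ≤ N} ‖T x_n‖ ≥ r. Then there exists δ > 0 such that whenever x_1, …, x_N are unit vectors in X with ‖|x_n| ∧ |x_m|‖ < δ for all n ≠ m, one has max_{1 ≤ n ≤ N} ‖T x_n‖ > r − ε. -/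
/-!
Subtracting from `|xₙ|` its overlaps `Sₙ = ∑_{m ≠ n} |xₘ| ⊓ |xₙ|` leaves pairwise disjoint
positive parts `(|xₙ| - Sₙ)⁺`, and clamping `xₙ` between `∓(|xₙ| - Sₙ)⁺` yields disjoint vectors
`yₙ` with `‖xₙ - yₙ‖ ≤ ‖Sₙ‖ ≤ N δ`; this only uses that the norm of `L¹` is a lattice norm.
Normalising the `yₙ` and applying the Tauberian hypothesis gives `‖T yₙ‖ ≥ r ‖yₙ‖` for some `n`,
and the bounds `‖yₙ‖ ≥ 1 - N δ`, `‖T xₙ - T yₙ‖ ≤ ‖T‖ N δ` transfer this to `xₙ` up to `ε`.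
-/

open MeasureTheory Finset

section LatticeOrderedGroup

variable {E : Type*} [AddCommGroup E] [Lattice E] [IsOrderedAddMonoid E]

lemma posPart_sub_inf_posPart_sub_eq_zero_s1 {a b s t : E} (hs : a ⊓ b ≤ s) (ht : a ⊓ b ≤ t) :
    (a - s)⁺ ⊓ (b - t)⁺ = 0 := by
  refine le_antisymm ?_ (le_inf (posPart_nonneg _) (posPart_nonneg _))
  calc (a - s)⁺ ⊓ (b - t)⁺ ≤ (a - a ⊓ b)⁺ ⊓ (b - a ⊓ b)⁺ :=
        inf_le_inf (posPart_mono (sub_le_sub_left hs a)) (posPart_mono (sub_le_sub_left ht b))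
    _ = (a - a ⊓ b) ⊓ (b - a ⊓ b) := by
        rw [posPart_eq_self.2 (sub_nonneg.2 inf_le_left),
          posPart_eq_self.2 (sub_nonneg.2 inf_le_right)]
    _ = 0 := by rw [← inf_sub, sub_self]

lemma abs_clamp_le {x u : E} (hu : 0 ≤ u) : |(x ⊔ -u) ⊓ u| ≤ u :=
  abs_le'.2 ⟨inf_le_right, neg_le.1 (le_inf le_sup_right ((neg_nonpos.2 hu).trans hu))⟩

lemma abs_sub_clamp_le {x u : E} (hu : u ≤ |x|) : |x - (x ⊔ -u) ⊓ u| ≤ |x| - u := by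
  have h0 : 0 ≤ |x| - u := sub_nonneg.2 hu
  refine abs_le'.2 ⟨?_, ?_⟩
  · rw [sub_inf]
    exact sup_le ((sub_nonpos.2 le_sup_left).trans h0) (sub_le_sub_right (le_abs_self x) u)
  · calc -(x - (x ⊔ -u) ⊓ u) ≤ (x ⊔ -u) - x := by
          rw [neg_sub]; exact sub_le_sub_right inf_le_left x
      _ = 0 ⊔ (-u - x) := by rw [sup_sub, sub_self]
      _ ≤ |x| - u := sup_le h0 (by
          rw [sub_eq_neg_add, sub_eq_neg_add, add_comm]; exact add_le_add_right (neg_le_abs x) _)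

end LatticeOrderedGroup

section NormedLattice

variable {E : Type*} [NormedAddCommGroup E] [Lattice E] [IsOrderedAddMonoid E] [HasSolidNorm E]

theorem exists_pairwise_disjoint_norm_sub_le {ι : Type*} [Fintype ι] [DecidableEq ι]
    (x : ι → E) :
    ∃ y : ι → E, (∀ m n, m ≠ n → |y m| ⊓ |y n| = 0) ∧
      ∀ n, ‖x n - y n‖ ≤ ∑ m ∈ univ.erase n, ‖|x m| ⊓ |x n|‖ := by
  set S : ι → E := fun n => ∑ m ∈ univ.erase n, |x m| ⊓ |x n|
  have hS_nonneg (n : ι) : 0 ≤ S n :=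
    sum_nonneg fun m _ => le_inf (abs_nonneg _) (abs_nonneg _)
  have hS_ge {m n : ι} (h : m ≠ n) : |x m| ⊓ |x n| ≤ S n :=
    single_le_sum (f := fun k => |x k| ⊓ |x n|) (fun k _ => le_inf (abs_nonneg _) (abs_nonneg _))
      (mem_erase.2 ⟨h, mem_univ m⟩)
  set u : ι → E := fun n => (|x n| - S n)⁺
  have hu_le (n : ι) : u n ≤ |x n| :=
    (posPart_mono (sub_le_self _ (hS_nonneg n))).trans_eq (posPart_eq_self.2 (abs_nonneg _))
  refine ⟨fun n => (x n ⊔ -u n) ⊓ u n, fun m n hmn => ?_, fun n => ?_⟩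
  · refine le_antisymm ?_ (le_inf (abs_nonneg _) (abs_nonneg _))
    calc _ ≤ u m ⊓ u n := inf_le_inf (abs_clamp_le (posPart_nonneg _))
          (abs_clamp_le (posPart_nonneg _))
      _ = 0 := posPart_sub_inf_posPart_sub_eq_zero_s1 (inf_comm (|x m|) _ ▸ hS_ge hmn.symm)
          (hS_ge hmn)
  · have h_abs : |x n - (x n ⊔ -u n) ⊓ u n| ≤ |S n| := calc
      _ ≤ |x n| - u n := abs_sub_clamp_le (hu_le n)
      _ = |x n| ⊓ S n := (inf_eq_sub_posPart_sub _ _).symm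
      _ ≤ |S n| := inf_le_right.trans (le_abs_self _)
    exact (HasSolidNorm.solid h_abs).trans (norm_sum_le _ _)

end NormedLattice

lemma ContinuousLinearMap.mul_norm_sub_le_norm_apply {E F : Type*} [NormedAddCommGroup E]
    [NormedSpace ℝ E] [NormedAddCommGroup F] [NormedSpace ℝ F] (T : E →L[ℝ] F) {x y : E}
    {r η : ℝ} (hr : 0 ≤ r) (hxy : ‖x - y‖ ≤ η) (hy : r ≤ ‖T (‖y‖⁻¹ • y)‖) :
    r * ‖x‖ - η * (r + ‖T‖) ≤ ‖T x‖ := by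
  have hTy : r * ‖y‖ ≤ ‖T y‖ := by
    rcases eq_or_ne y 0 with rfl | hy0
    · simp
    · calc r * ‖y‖ ≤ ‖T (‖y‖⁻¹ • y)‖ * ‖y‖ := by gcongr
        _ = ‖T y‖ := by
          rw [map_smul, norm_smul, norm_inv, norm_norm, mul_right_comm,
            inv_mul_cancel₀ (norm_ne_zero_iff.2 hy0), one_mul]
  have hy_norm : ‖x‖ - η ≤ ‖y‖ := by linarith [norm_sub_norm_le x y]
  have hTyx : ‖T y - T x‖ ≤ ‖T‖ * η := by
    rw [← map_sub]; exact (T.le_opNorm _).trans (by rw [norm_sub_rev]; gcongr)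
  calc r * ‖x‖ - η * (r + ‖T‖) = r * (‖x‖ - η) - ‖T‖ * η := by ring
    _ ≤ ‖T y‖ - ‖T y - T x‖ := by gcongr; exact hTy.trans' (by gcongr)
    _ ≤ ‖T x‖ := by linarith [norm_sub_norm_le (T y) (T x)]

namespace MeasureTheory.Lp

variable {α : Type*} [MeasurableSpace α] {μ : Measure α} {p : ENNReal}

lemma abs_inf_abs_eq_zero_iff {f g : Lp ℝ p μ} : |f| ⊓ |g| = 0 ↔ ∀ᵐ a ∂μ, f a = 0 ∨ g a = 0 := by
  rw [Lp.ext_iff]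
  refine Filter.eventually_congr ?_
  filter_upwards [Lp.coeFn_inf |f| |g|, Lp.coeFn_abs f, Lp.coeFn_abs g, Lp.coeFn_zero ℝ p μ]
    with a h_inf h_f h_g h_zero
  rw [h_inf, Pi.inf_apply, h_f, h_g, h_zero, Pi.zero_apply, ← abs_eq_zero (a := f a), ← abs_eq_zero (a := g a)]
  refine ⟨fun h => (min_choice _ _).imp (·.symm.trans h) (·.symm.trans h), ?_⟩
  rintro (h | h) <;> simp [h]

lemma abs_smul_inf_abs_smul_eq_zero {f g : Lp ℝ p μ} (h : |f| ⊓ |g| = 0) (c d : ℝ) :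
    |c • f| ⊓ |d • g| = 0 := by
  rw [abs_inf_abs_eq_zero_iff] at h ⊢
  filter_upwards [h, Lp.coeFn_smul c f, Lp.coeFn_smul d g] with a ha hf hg
  rw [hf, hg, Pi.smul_apply, Pi.smul_apply, smul_eq_mul, smul_eq_mul]
  rcases ha with ha | ha <;> simp [ha]

end MeasureTheory.Lp

theorem stmt1_general {α : Type*} [MeasurableSpace α] (μ : Measure α)
    (Y : Type*) [NormedAddCommGroup Y] [NormedSpace ℝ Y]
    (T : Lp ℝ 1 μ →L[ℝ] Y) (r : ℝ) (hr : 0 < r) (N : ℕ) (ε : ℝ) (hε : 0 < ε)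
    (hT : ∀ x : Fin N → Lp ℝ 1 μ, (∀ n, ‖x n‖ = 1) →
      (∀ m n, m ≠ n → |x m| ⊓ |x n| = 0) → ∃ n, r ≤ ‖T (x n)‖) :
    ∃ δ > 0, ∀ x : Fin N → Lp ℝ 1 μ, (∀ n, ‖x n‖ = 1) →
      (∀ m n, m ≠ n → ‖|x m| ⊓ |x n|‖ < δ) → ∃ n, r - ε < ‖T (x n)‖ := by
  -- `η < 1` keeps the disjoint approximants nonzero; `η * (r + ‖T‖)` is the loss in `‖T xₙ‖`.
  set η := ε / (r + ‖T‖ + ε)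
  have hRε : 0 < r + ‖T‖ + ε := by positivity
  have hη0 : 0 < η := by positivity
  have hη1 : η < 1 := (div_lt_one hRε).2 (by linarith [norm_nonneg T])
  have hηε : η * (r + ‖T‖) < ε := by
    rw [div_mul_eq_mul_div, div_lt_iff₀ hRε]; nlinarith
  refine ⟨η / (N + 1), by positivity, fun x hx hδ => ?_⟩
  obtain ⟨y, hy_disj, hxy⟩ := exists_pairwise_disjoint_norm_sub_le x
  have hxy_η (n : Fin N) : ‖x n - y n‖ ≤ η := calc
    _ ≤ ∑ m ∈ univ.erase n, ‖|x m| ⊓ |x n|‖ := hxy n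
    _ ≤ ∑ m ∈ univ.erase n, η / (N + 1) :=
        sum_le_sum fun m hm => (hδ m n (ne_of_mem_erase hm)).le
    _ ≤ (N + 1) * (η / (N + 1)) := by
        rw [sum_const, nsmul_eq_mul]; gcongr
        exact_mod_cast (card_erase_le.trans_eq (card_fin N)).trans N.le_succ
    _ = η := mul_div_cancel₀ η (by positivity)
  have hy0 (n : Fin N) : y n ≠ 0 := fun h => by
    have h_le := hxy_η n
    rw [h, sub_zero, hx n] at h_le
    linarith
  obtain ⟨n, hn⟩ := hT (fun n => ‖y n‖⁻¹ • y n) (fun n => norm_smul_inv_norm (hy0 n))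
    (fun m n hmn => Lp.abs_smul_inf_abs_smul_eq_zero (hy_disj m n hmn) _ _)
  refine ⟨n, ?_⟩
  have h_est := T.mul_norm_sub_le_norm_apply hr.le (hxy_η n) hn
  rw [hx n, mul_one] at h_est
  linarith

/-- If `T : L1(μ) → Y` is `(r,N)`-Tauberian (every `N`-tuple of pairwise disjoint unit
vectors has some `‖T xₙ‖ ≥ r`), then for every `ε > 0` there is `δ > 0` such that every
`N`-tuple of unit vectors that is `δ`-disjoint (`‖|xₙ| ⊓ |xₘ|‖ < δ` for `n ≠ m`) has some
`‖T xₙ‖ > r - ε`. -/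
theorem stmt1 {α : Type*} [MeasurableSpace α] (μ : Measure α)
    (Y : Type*) [NormedAddCommGroup Y] [NormedSpace ℝ Y] [CompleteSpace Y]
    (T : Lp ℝ 1 μ →L[ℝ] Y) (r : ℝ) (hr : 0 < r) (N : ℕ) (ε : ℝ) (hε : 0 < ε)
    (hT : ∀ x : Fin N → Lp ℝ 1 μ, (∀ n, ‖x n‖ = 1) →
      (∀ m n, m ≠ n → |x m| ⊓ |x n| = 0) → ∃ n, r ≤ ‖T (x n)‖) :
    ∃ δ > 0, ∀ x : Fin N → Lp ℝ 1 μ, (∀ n, ‖x n‖ = 1) →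
      (∀ m n, m ≠ n → ‖|x m| ⊓ |x n|‖ < δ) → ∃ n, r - ε < ‖T (x n)‖ :=
  stmt1_general μ Y T r hr N ε hε hT
end

section
/- Let Z be a Banach space and S : Z → Z a bounded injective operator with dense range that is not surjective. In the space Z ⊕_∞ Z (with norm ‖(x,y)‖ = max(‖x‖,‖y‖)), define X := Z ⊕ {0} and Y := {(x, Sx) : x ∈ Z} (the graph of S). Then X and Y are closed subspaces with X ∩ Y = {0}, X + Y is dense in Z ⊕_∞ Z, and X + Y ≠ Z ⊕_∞ Z; i.e., X and Y are quasi-complementary but not complementary. -/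
/-!
Since `(a, S z) = (a - z, 0) + (z, S z)`, the sum `X + Y` is exactly `Z × range S`: it is dense
because `range S` is, and proper because `S` is not onto. A vector of `X ∩ Y` has the form
`(z, 0)` with `S z = 0`, so injectivity of `S` gives `X ∩ Y = 0`.
-/

namespace LinearMap

variable {R M N : Type*} [Semiring R] [AddCommMonoid N] [Module R N]

theorem prod_top_bot_inf_graph [AddCommMonoid M] [Module R M] (f : M →ₗ[R] N) :
    (⊤ : Submodule R M).prod ⊥ ⊓ f.graph = (ker f).prod ⊥ := by
  ext ⟨a, b⟩
  simp only [Submodule.mem_inf, Submodule.mem_prod, Submodule.mem_top, Submodule.mem_bot,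
    mem_graph_iff, mem_ker, true_and]
  constructor
  · rintro ⟨rfl, hb⟩
    exact ⟨hb.symm, rfl⟩
  · rintro ⟨ha, rfl⟩
    exact ⟨rfl, ha.symm⟩

theorem prod_top_bot_sup_graph [AddCommGroup M] [Module R M] (f : M →ₗ[R] N) :
    (⊤ : Submodule R M).prod ⊥ ⊔ f.graph = (⊤ : Submodule R M).prod (range f) := by
  refine le_antisymm (sup_le (Submodule.prod_mono le_rfl bot_le) ?_) ?_
  · rintro ⟨a, b⟩ (hb : b = f a)
    exact ⟨trivial, a, hb.symm⟩
  · rintro ⟨a, b⟩ ⟨-, z, rfl⟩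
    rw [Submodule.mem_sup]
    exact ⟨(a - z, 0), ⟨trivial, rfl⟩, (z, f z), rfl, by simp⟩

end LinearMap

theorem Submodule.isClosed_prod {R M N : Type*} [Semiring R] [AddCommMonoid M] [AddCommMonoid N]
    [Module R M] [Module R N] [TopologicalSpace M] [TopologicalSpace N]
    {p : Submodule R M} {q : Submodule R N} (hp : IsClosed (p : Set M))
    (hq : IsClosed (q : Set N)) : IsClosed (p.prod q : Set (M × N)) :=
  Submodule.prod_coe p q ▸ hp.prod hq

theorem ContinuousLinearMap.isClosed_graph {R M N : Type*} [Semiring R] [AddCommMonoid M]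
    [AddCommMonoid N] [Module R M] [Module R N] [TopologicalSpace M] [TopologicalSpace N]
    [T2Space N] (f : M →L[R] N) : IsClosed ((f : M →ₗ[R] N).graph : Set (M × N)) :=
  isClosed_eq continuous_snd (f.continuous.comp continuous_fst)

theorem stmt5_general (Z : Type*) [NormedAddCommGroup Z] [NormedSpace ℝ Z]
    (S : Z →L[ℝ] Z) (hSinj : Function.Injective S) (hSdense : DenseRange S)
    (hSnsurj : ¬Function.Surjective S)
    (X Y : Submodule ℝ (Z × Z))
    (hX : X = Submodule.prod (⊤ : Submodule ℝ Z) (⊥ : Submodule ℝ Z))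
    (hY : Y = LinearMap.graph (S : Z →ₗ[ℝ] Z)) :
    IsClosed (X : Set (Z × Z)) ∧ IsClosed (Y : Set (Z × Z)) ∧
      X ⊓ Y = ⊥ ∧ Dense ((X ⊔ Y : Submodule ℝ (Z × Z)) : Set (Z × Z)) ∧
      X ⊔ Y ≠ ⊤ := by
  subst hX hY
  refine ⟨Submodule.isClosed_prod isClosed_univ isClosed_singleton, S.isClosed_graph, ?_, ?_, ?_⟩
  · rw [LinearMap.prod_top_bot_inf_graph, LinearMap.ker_eq_bot.mpr hSinj, Submodule.prod_bot]
  · rw [LinearMap.prod_top_bot_sup_graph, Submodule.prod_coe, Submodule.top_coe,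
      LinearMap.coe_range]
    exact dense_univ.prod hSdense
  · rw [LinearMap.prod_top_bot_sup_graph, Ne, Submodule.prod_eq_top_iff, LinearMap.range_eq_top]
    exact fun h ↦ hSnsurj h.2

/-- Let `S : Z → Z` be bounded, injective, with dense range, not surjective. In
`Z ⊕_∞ Z` (the product `Z × Z` carries the max norm), `X = Z ⊕ {0}` and the graph
`Y = {(z, Sz)}` are closed subspaces with `X ∩ Y = {0}`, `X + Y` dense, but
`X + Y ≠ Z ⊕_∞ Z`: they are quasi-complementary but not complementary. -/
theorem stmt5 (Z : Type*) [NormedAddCommGroup Z] [NormedSpace ℝ Z] [CompleteSpace Z]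
    (S : Z →L[ℝ] Z) (hSinj : Function.Injective S) (hSdense : DenseRange S)
    (hSnsurj : ¬Function.Surjective S)
    (X Y : Submodule ℝ (Z × Z))
    (hX : X = Submodule.prod (⊤ : Submodule ℝ Z) (⊥ : Submodule ℝ Z))
    (hY : Y = LinearMap.graph (S : Z →ₗ[ℝ] Z)) :
    IsClosed (X : Set (Z × Z)) ∧ IsClosed (Y : Set (Z × Z)) ∧
      X ⊓ Y = ⊥ ∧ Dense ((X ⊔ Y : Submodule ℝ (Z × Z)) : Set (Z × Z)) ∧
      X ⊔ Y ≠ ⊤ :=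
  stmt5_general Z S hSinj hSdense hSnsurj X Y hX hY
end

section
/- Let X and Y be separable infinite-dimensional Banach spaces and ε > 0, and let Y_0 be a dense linear subspace of Y of countable (algebraic) dimension. Then there exists a nuclear operator u : X → Y with nuclear norm less than ε such that u is injective and u(X) ⊇ Y_0. -/
open Submodule Set

/-!
Choose a biorthogonal system `(xₙ, fₙ)` in `X` with `‖fₙ‖ = 1` and total functionals, and a
biorthogonal system `(yₙ, gₙ)` in `Y` with `‖yₙ‖ = 1` whose vectors span a space containing `Y₀`.
Both come from the back-and-forth construction of Markushevich bases: at each step project the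
next target onto the common kernel of the functionals found so far and separate it from the
previous vectors by a functional; a target that is already caught is replaced by any vector
outside the current span, which exists by infinite dimensionality. On the `X` side the
construction runs on the pairing of `X*` with `X`, with a countable total family of functionals
as targets, which exists because `X` is separable. With `λₙ = ε 2⁻ⁿ / 4`, the operator
`u = ∑ λₙ fₙ ⊗ yₙ` satisfies `gₘ (u x) = λₘ fₘ x`, so it is injective, and `u xₘ = λₘ yₘ`, so its
range contains the span of the `yₙ`.
-/

theorem exists_seq_of_forall_finset_exists_insert {α : Type*} [DecidableEq α]
    (Inv : Finset α → Prop) (Q : ℕ → Finset α → α → Prop) (h₀ : Inv ∅)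
    (h : ∀ n s, Inv s → ∃ y, Q n s y ∧ Inv (insert y s)) :
    ∃ f : ℕ → α, ∀ n, Inv ((Finset.range n).image f) ∧ Q n ((Finset.range n).image f) (f n) := by
  let T : ℕ → {s // Inv s} := fun n =>
    Nat.rec ⟨∅, h₀⟩ (fun n s => ⟨insert (h n s.1 s.2).choose s.1, (h n s.1 s.2).choose_spec.2⟩) n
  let f n := (h n (T n).1 (T n).2).choose
  have hT : ∀ n, (T n).1 = (Finset.range n).image f := by
    intro n
    induction n with
    | zero => rfl
    | succ n ih => rw [Finset.range_add_one, Finset.image_insert, ← ih]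
  exact ⟨f, fun n => hT n ▸ ⟨(T n).2, (h n _ (T n).2).choose_spec.1⟩⟩

section Biorthogonal

variable {K M N : Type*} [Field K] [AddCommGroup M] [Module K M] [AddCommGroup N] [Module K N]
  {B : M →ₗ[K] N →ₗ[K] K}

def IsBiorthogonal (B : M →ₗ[K] N →ₗ[K] K) (S : Set (M × N)) : Prop :=
  (∀ p ∈ S, B p.1 p.2 = 1) ∧ S.Pairwise fun p q => B p.1 q.2 = 0

theorem LinearMap.SeparatingLeft.exists_forall_eq_zero_and_eq_one (hB : B.SeparatingLeft)
    {s : Set M} (hs : s.Finite) {m : M} (hm : m ∉ span K s) :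
    ∃ n, (∀ x ∈ s, B x n = 0) ∧ B m n = 1 := by
  have : Finite s := hs.to_subtype
  have hBm : B m ∉ span K (Set.range fun x : s => B x) := by
    rw [← image_eq_range, span_image, mem_map]
    rintro ⟨m', hm', hBm'⟩
    rw [LinearMap.separatingLeft_iff_ker_eq_bot, LinearMap.ker_eq_bot] at hB
    exact hm (hB hBm' ▸ hm')
  have hker : ¬ ⨅ x : s, LinearMap.ker (B x) ≤ LinearMap.ker (B m) :=
    fun h => hBm (mem_span_of_iInf_ker_le_ker h)
  simp only [SetLike.le_def, mem_iInf, LinearMap.mem_ker, not_forall] at hker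
  obtain ⟨n, hn, hmn⟩ := hker
  refine ⟨(B m n)⁻¹ • n, fun x hx => ?_, ?_⟩
  · simp [hn ⟨x, hx⟩]
  · simp [hmn]

theorem LinearMap.SeparatingLeft.finiteDimensional [FiniteDimensional K N]
    (hB : B.SeparatingLeft) : FiniteDimensional K M :=
  Module.Finite.of_injective B (LinearMap.ker_eq_bot.1 (separatingLeft_iff_ker_eq_bot.1 hB))

theorem exists_notMem_span_of_finite (hM : ¬FiniteDimensional K M) {s : Set M} (hs : s.Finite) :
    ∃ m, m ∉ span K s := by
  by_contra! h
  exact hM ⟨⟨hs.toFinset, by simpa [eq_top_iff'] using h⟩⟩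

namespace IsBiorthogonal

theorem apply_sub_sum_eq_zero {S : Finset (M × N)} (hS : IsBiorthogonal B S) (m : M)
    {q : M × N} (hq : q ∈ S) : B (m - ∑ p ∈ S, B m p.2 • p.1) q.2 = 0 := by
  rw [map_sub, LinearMap.sub_apply, map_sum, LinearMap.sum_apply,
    Finset.sum_eq_single_of_mem q hq fun p hp hpq => by simp [hS.2 hp hq hpq], map_smul,
    LinearMap.smul_apply, hS.1 q hq, smul_eq_mul, mul_one, sub_self]

theorem insert_of_apply_eq {S : Set (M × N)} (hS : IsBiorthogonal B S) {y : M × N}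
    (hy : B y.1 y.2 = 1) (hyS : ∀ p ∈ S, B p.1 y.2 = 0 ∧ B y.1 p.2 = 0) :
    IsBiorthogonal B (insert y S) :=
  ⟨forall_mem_insert.2 ⟨hy, hS.1⟩, hS.2.insert fun p hp _ => (hyS p hp).symm⟩

theorem exists_extend (hB : B.SeparatingLeft) {S : Finset (M × N)} (hS : IsBiorthogonal B S)
    {m : M} (hm : m ∉ span K (Prod.fst '' (S : Set (M × N)))) :
    ∃ y ∉ S, IsBiorthogonal B (insert y (S : Set (M × N))) ∧
      m ∈ span K (Prod.fst '' insert y (S : Set (M × N))) := by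
  set m' := m - ∑ p ∈ S, B m p.2 • p.1
  have hsum : ∑ p ∈ S, B m p.2 • p.1 ∈ span K (Prod.fst '' (S : Set (M × N))) :=
    sum_mem fun p hp => smul_mem _ _ (subset_span (mem_image_of_mem _ hp))
  have hm_eq : m = m' + ∑ p ∈ S, B m p.2 • p.1 := (sub_add_cancel _ _).symm
  have hm' : m' ∉ span K (Prod.fst '' (S : Set (M × N))) :=
    fun h => hm (hm_eq ▸ add_mem h hsum)
  obtain ⟨n, hn, hm'n⟩ := hB.exists_forall_eq_zero_and_eq_one (S.finite_toSet.image _) hm'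
  have hyS : ∀ p ∈ S, B p.1 n = 0 ∧ B m' p.2 = 0 :=
    fun p hp => ⟨hn _ (mem_image_of_mem _ hp), hS.apply_sub_sum_eq_zero m hp⟩
  refine ⟨(m', n), fun h => one_ne_zero (hm'n ▸ (hyS _ h).2), ?_, ?_⟩
  · exact hS.insert_of_apply_eq hm'n hyS
  · rw [image_insert_eq, hm_eq]
    exact add_mem (subset_span (mem_insert _ _)) (span_mono (subset_insert _ _) hsum)

theorem exists_extend_mem_span (hB : B.SeparatingLeft) (hM : ¬FiniteDimensional K M)
    {S : Finset (M × N)} (hS : IsBiorthogonal B S) (t : M) :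
    ∃ y ∉ S, IsBiorthogonal B (insert y (S : Set (M × N))) ∧
      t ∈ span K (Prod.fst '' insert y (S : Set (M × N))) := by
  by_cases ht : t ∈ span K (Prod.fst '' (S : Set (M × N)))
  · obtain ⟨m, hm⟩ := exists_notMem_span_of_finite hM (S.finite_toSet.image Prod.fst)
    obtain ⟨y, hy, hyS, -⟩ := hS.exists_extend hB hm
    exact ⟨y, hy, hyS, span_mono (image_mono (by simp)) ht⟩
  · exact hS.exists_extend hB ht

end IsBiorthogonal

theorem exists_biorthogonal_seq_mem_span (hB : B.SeparatingLeft) (hM : ¬FiniteDimensional K M)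
    (t : ℕ → M) : ∃ (e : ℕ → M) (φ : ℕ → N),
      (∀ i j, B (e i) (φ j) = if i = j then 1 else 0) ∧ ∀ k, t k ∈ span K (Set.range e) := by
  classical
  obtain ⟨f, hf⟩ := exists_seq_of_forall_finset_exists_insert
    (fun S : Finset (M × N) => IsBiorthogonal B ↑S)
    (fun n S y => y ∉ S ∧ t n ∈ span K (Prod.fst '' insert y (S : Set (M × N))))
    (by simp [IsBiorthogonal]) fun n S hS => by
      obtain ⟨y, hyS, hy, ht⟩ := IsBiorthogonal.exists_extend_mem_span hB hM hS (t n)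
      exact ⟨y, ⟨hyS, ht⟩, by rwa [Finset.coe_insert]⟩
  have hmem : ∀ i j, i < j → f i ∈ (Finset.range j).image f :=
    fun i j hij => Finset.mem_image_of_mem f (Finset.mem_range.2 hij)
  have hinj : f.Injective := by
    intro i j hij
    by_contra hne
    rcases Nat.lt_or_gt_of_ne hne with h | h
    · exact (hf j).2.1 (hij ▸ hmem i j h)
    · exact (hf i).2.1 (hij ▸ hmem j i h)
  refine ⟨fun n => (f n).1, fun n => (f n).2, fun i j => ?_, fun k => ?_⟩
  · have hS := (hf (max i j + 1)).1
    have hi := hmem i (max i j + 1) (by omega)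
    have hj := hmem j (max i j + 1) (by omega)
    split_ifs with hij
    · exact hij ▸ hS.1 _ hi
    · exact hS.2 hi hj (hinj.ne hij)
  · refine span_mono ?_ (hf k).2.2
    rintro _ ⟨_, hp, rfl⟩
    rw [Finset.coe_image] at hp
    rcases hp with rfl | ⟨i, -, rfl⟩ <;> exact mem_range_self _

end Biorthogonal

theorem exists_biorthogonal_seq_norm_eq_one_mem_span {𝕜 M N : Type*} [RCLike 𝕜]
    [NormedAddCommGroup M] [NormedSpace 𝕜 M] [AddCommGroup N] [Module 𝕜 N]
    {B : M →ₗ[𝕜] N →ₗ[𝕜] 𝕜} (hB : B.SeparatingLeft) (hM : ¬FiniteDimensional 𝕜 M) (t : ℕ → M) :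
    ∃ (e : ℕ → M) (φ : ℕ → N), (∀ i j, B (e i) (φ j) = if i = j then 1 else 0) ∧
      (∀ n, ‖e n‖ = 1) ∧ ∀ k, t k ∈ span 𝕜 (Set.range e) := by
  obtain ⟨e, φ, heφ, ht⟩ := exists_biorthogonal_seq_mem_span hB hM t
  have he : ∀ n, e n ≠ 0 := fun n h => by simpa [h] using heφ n n
  have hne : ∀ n, (‖e n‖ : 𝕜) ≠ 0 := fun n => by simpa using he n
  refine ⟨fun n => (‖e n‖⁻¹ : 𝕜) • e n, fun n => (‖e n‖ : 𝕜) • φ n, fun i j => ?_,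
    fun n => norm_smul_inv_norm (𝕜 := 𝕜) (he n), fun k => span_le.2 ?_ (ht k)⟩
  · split_ifs with hij
    · subst hij
      simp [heφ, hne]
    · simp [heφ, hij]
  · rintro _ ⟨n, rfl⟩
    simpa [smul_smul, hne] using
      smul_mem (span 𝕜 (Set.range fun n => (‖e n‖⁻¹ : 𝕜) • e n)) (‖e n‖ : 𝕜)
        (subset_span (mem_range_self n))

theorem SeparatingDual.exists_seq_eq_zero_of_forall_eq_zero {R V : Type*} [Ring R]
    [TopologicalSpace R] [T1Space R] [AddCommGroup V] [TopologicalSpace V] [Module R V]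
    [HereditarilyLindelofSpace V] [SeparatingDual R V] :
    ∃ G : ℕ → StrongDual R V, ∀ x, (∀ n, G n x = 0) → x = 0 := by
  obtain ⟨G, hG⟩ := eq_closed_inter_nat (fun f : StrongDual R V => f ⁻¹' {0})
    fun f => isClosed_singleton.preimage f.continuous
  refine ⟨G, fun x hx => SeparatingDual.eq_zero_of_forall_dual_eq_zero (R := R) fun f => ?_⟩
  have : x ∈ ⋂ f : StrongDual R V, f ⁻¹' {0} := hG ▸ mem_iInter.2 hx
  exact mem_iInter.1 this f

theorem separatingLeft_topDualPairing_flip {𝕜 E : Type*} [RCLike 𝕜] [NormedAddCommGroup E]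
    [NormedSpace 𝕜 E] : (topDualPairing 𝕜 E).flip.SeparatingLeft :=
  fun _ hx => SeparatingDual.eq_zero_of_forall_dual_eq_zero hx

theorem apply_eq_zero_of_mem_span {𝕜 E ι : Type*} [NontriviallyNormedField 𝕜]
    [NormedAddCommGroup E] [NormedSpace 𝕜 E] {f : ι → StrongDual 𝕜 E} {φ : StrongDual 𝕜 E}
    (hφ : φ ∈ span 𝕜 (Set.range f)) {x : E} (hx : ∀ i, f i x = 0) : φ x = 0 := by
  induction hφ using span_induction with
  | mem _ h => obtain ⟨i, rfl⟩ := h; exact hx i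
  | zero => rfl
  | add _ _ _ _ ha hb => simp [ha, hb]
  | smul a _ _ h => simp [h]

section NuclearRepresentation

variable {𝕜 X Y : Type*} [NontriviallyNormedField 𝕜] [NormedAddCommGroup X] [NormedSpace 𝕜 X]
  [NormedAddCommGroup Y] [NormedSpace 𝕜 Y]
  {l : ℕ → 𝕜} {f : ℕ → StrongDual 𝕜 X} {y : ℕ → Y}

theorem hasSum_tsum_smul_smulRight_apply [CompleteSpace Y] (hl : Summable fun n => ‖l n‖)
    (hf : ∀ n, ‖f n‖ ≤ 1) (hy : ∀ n, ‖y n‖ ≤ 1) (x : X) :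
    HasSum (fun n => (l n * f n x) • y n) ((∑' n, l n • (f n).smulRight (y n)) x) := by
  have hT : Summable fun n => l n • (f n).smulRight (y n) :=
    Summable.of_norm_bounded hl fun n => by
      rw [norm_smul, ContinuousLinearMap.norm_smulRight_apply]
      exact mul_le_of_le_one_right (norm_nonneg _) (mul_le_one₀ (hf n) (norm_nonneg _) (hy n))
  simpa [smul_smul] using hT.hasSum.mapL (ContinuousLinearMap.apply 𝕜 Y x)

theorem HasSum.apply_eq_of_biorthogonal {g : ℕ → StrongDual 𝕜 Y}
    (hgy : ∀ i j, g j (y i) = if i = j then 1 else 0) {c : ℕ → 𝕜} {v : Y}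
    (hv : HasSum (fun n => c n • y n) v) (m : ℕ) : g m v = c m := by
  have := hv.mapL (g m)
  simp only [map_smul, hgy, smul_eq_mul, mul_ite, mul_one, mul_zero] at this
  simpa using this.unique (hasSum_single m fun n hn => if_neg hn)

theorem injective_of_hasSum {u : X →L[𝕜] Y}
    (hu : ∀ x, HasSum (fun n => (l n * f n x) • y n) (u x)) {g : ℕ → StrongDual 𝕜 Y}
    (hgy : ∀ i j, g j (y i) = if i = j then 1 else 0) (hl : ∀ n, l n ≠ 0)
    (hf : ∀ x, (∀ n, f n x = 0) → x = 0) : Function.Injective u := by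
  refine (injective_iff_map_eq_zero u).2 fun x hx => hf x fun n => ?_
  have := (hu x).apply_eq_of_biorthogonal hgy n
  rw [hx, map_zero] at this
  exact (mul_eq_zero.1 this.symm).resolve_left (hl n)

theorem span_range_subset_range_of_hasSum {u : X →L[𝕜] Y}
    (hu : ∀ x, HasSum (fun n => (l n * f n x) • y n) (u x)) {x : ℕ → X}
    (hfx : ∀ i j, f i (x j) = if i = j then 1 else 0) (hl : ∀ n, l n ≠ 0) :
    (span 𝕜 (Set.range y) : Set Y) ⊆ Set.range u := by
  suffices span 𝕜 (Set.range y) ≤ LinearMap.range (u : X →ₗ[𝕜] Y) from fun v hv => this hv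
  refine span_le.2 ?_
  rintro _ ⟨m, rfl⟩
  refine ⟨(l m)⁻¹ • x m, (hu _).unique ?_⟩
  convert hasSum_ite_eq m (y m) using 2 with n
  split_ifs with h <;> simp [hfx, h, hl]

end NuclearRepresentation

theorem stmt7_general (X Y : Type*) [NormedAddCommGroup X] [NormedSpace ℝ X]
    [NormedAddCommGroup Y] [NormedSpace ℝ Y] [CompleteSpace Y]
    [TopologicalSpace.SeparableSpace X]
    (hX : ¬FiniteDimensional ℝ X) (hY : ¬FiniteDimensional ℝ Y)
    (ε : ℝ) (hε : 0 < ε) (Y₀ : Submodule ℝ Y)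
    (hY₀ctble : ∃ b : Set Y, b.Countable ∧ Submodule.span ℝ b = Y₀) :
    ∃ (u : X →L[ℝ] Y) (l : ℕ → ℝ) (f : ℕ → StrongDual ℝ X) (y : ℕ → Y),
      (∀ n, ‖f n‖ ≤ 1) ∧ (∀ n, ‖y n‖ ≤ 1) ∧
      Summable (fun n => |l n|) ∧ (∑' n, |l n|) < ε ∧
      (∀ x : X, HasSum (fun n => (l n * f n x) • y n) (u x)) ∧
      Function.Injective u ∧ (Y₀ : Set Y) ⊆ Set.range u := by
  obtain ⟨G, hG⟩ := SeparatingDual.exists_seq_eq_zero_of_forall_eq_zero (R := ℝ) (V := X)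
  have hX' : ¬FiniteDimensional ℝ (StrongDual ℝ X) :=
    fun _ => hX separatingLeft_topDualPairing_flip.finiteDimensional
  obtain ⟨f, x, hfx, hf, hGf⟩ := exists_biorthogonal_seq_norm_eq_one_mem_span
    (B := topDualPairing ℝ X) (fun _ h => ContinuousLinearMap.ext h) hX' G
  obtain ⟨b, hb, rfl⟩ := hY₀ctble
  obtain ⟨w, hbw⟩ := Set.countable_iff_exists_subset_range.1 hb
  obtain ⟨y, g, hyg, hy, hwy⟩ :=
    exists_biorthogonal_seq_norm_eq_one_mem_span separatingLeft_topDualPairing_flip hY w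
  have hf_total : ∀ x, (∀ n, f n x = 0) → x = 0 :=
    fun x hx => hG x fun k => apply_eq_zero_of_mem_span (hGf k) hx
  have hY₀ : span ℝ b ≤ span ℝ (Set.range y) :=
    (span_mono hbw).trans (span_le.2 (Set.range_subset_iff.2 hwy))
  set l : ℕ → ℝ := fun n => ε / 4 * (1 / 2) ^ n
  have hl_pos : ∀ n, 0 < l n := fun n => by positivity
  have hl_ne : ∀ n, l n ≠ 0 := fun n => (hl_pos n).ne'
  have hl_sum : HasSum (fun n => |l n|) (ε / 4 * 2) := by
    simpa only [abs_of_pos (hl_pos _)] using hasSum_geometric_two.mul_left (ε / 4)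
  have hu := hasSum_tsum_smul_smulRight_apply (l := l)
    (by simpa only [Real.norm_eq_abs] using hl_sum.summable) (fun n => (hf n).le)
    (fun n => (hy n).le)
  exact ⟨_, l, f, y, fun n => (hf n).le, fun n => (hy n).le, hl_sum.summable,
    by rw [hl_sum.tsum_eq]; linarith, hu, injective_of_hasSum hu hyg hl_ne hf_total,
    (SetLike.coe_mono hY₀).trans (span_range_subset_range_of_hasSum hu hfx hl_ne)⟩

/-- Given separable infinite-dimensional Banach spaces `X`, `Y`, `ε > 0`, and a dense
countable-dimensional subspace `Y₀` of `Y`, there is an injective nuclear operator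
`u : X → Y` with nuclear norm `< ε` (witnessed by a nuclear representation
`u x = Σ λₙ ⟨x*ₙ, x⟩ yₙ` with `Σ |λₙ| < ε`) whose range contains `Y₀`. -/
theorem stmt7 (X Y : Type*) [NormedAddCommGroup X] [NormedSpace ℝ X] [CompleteSpace X]
    [NormedAddCommGroup Y] [NormedSpace ℝ Y] [CompleteSpace Y]
    [TopologicalSpace.SeparableSpace X] [TopologicalSpace.SeparableSpace Y]
    (hX : ¬FiniteDimensional ℝ X) (hY : ¬FiniteDimensional ℝ Y)
    (ε : ℝ) (hε : 0 < ε) (Y₀ : Submodule ℝ Y)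
    (hY₀dense : Dense (Y₀ : Set Y))
    (hY₀ctble : ∃ b : Set Y, b.Countable ∧ Submodule.span ℝ b = Y₀) :
    ∃ (u : X →L[ℝ] Y) (l : ℕ → ℝ) (f : ℕ → StrongDual ℝ X) (y : ℕ → Y),
      (∀ n, ‖f n‖ ≤ 1) ∧ (∀ n, ‖y n‖ ≤ 1) ∧
      Summable (fun n => |l n|) ∧ (∑' n, |l n|) < ε ∧
      (∀ x : X, HasSum (fun n => (l n * f n x) • y n) (u x)) ∧
      Function.Injective u ∧ (Y₀ : Set Y) ⊆ Set.range u :=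
  stmt7_general X Y hX hY ε hε Y₀ hY₀ctble
end

section
/- Let X, Y, Z be Banach spaces, T : X → Y a Tauberian operator, and u : X → Z a weakly compact operator. Then the operator T_1 : X → Y ⊕_1 Z defined by T_1 x = (Tx, ux) is Tauberian; more simply, if v : X → Y is weakly compact, then T + v : X → Y is Tauberian. -/
/-!
If `T₁ = (T, u)`, then `T = P ∘ T₁` for the projection `P : Y ⊕₁ Z → Y`, so `T** = P** T₁**`
sends every `F` with `T₁** F ∈ Y ⊕₁ Z` into `Y`, and such an `F` lies in `X` because `T` is
Tauberian. For the sum, `T** F = (T + v)** F - v** F`, which lies in `Y` whenever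
`(T + v)** F` does, since `v**` takes all its values in `Y`.
-/

open NormedSpace

variable {X Y : Type*} [NormedAddCommGroup X] [NormedSpace ℝ X]
  [NormedAddCommGroup Y] [NormedSpace ℝ Y]

/-- The adjoint `T* : Y* → X*` of a bounded operator `T : X → Y`. -/
noncomputable def adjointOp (T : X →L[ℝ] Y) : StrongDual ℝ Y →L[ℝ] StrongDual ℝ X :=
  (ContinuousLinearMap.compSL X Y ℝ (RingHom.id ℝ) (RingHom.id ℝ)).flip T

/-- The double adjoint `T** : X** → Y**`. -/
noncomputable def bidualOp (T : X →L[ℝ] Y) :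
    StrongDual ℝ (StrongDual ℝ X) →L[ℝ] StrongDual ℝ (StrongDual ℝ Y) :=
  adjointOp (adjointOp T)

/-- `T` is Tauberian: `(T**)⁻¹(Y) = X` under the canonical embeddings. -/
def Tauberian (T : X →L[ℝ] Y) : Prop :=
  ∀ F : StrongDual ℝ (StrongDual ℝ X), (∃ y : Y, bidualOp T F = inclusionInDoubleDual ℝ Y y) →
    ∃ x : X, F = inclusionInDoubleDual ℝ X x

/-- `v` is weakly compact: `v**(X**) ⊆ Y` under the canonical embedding of `Y` in `Y**`. -/
def WeaklyCompactOp (v : X →L[ℝ] Y) : Prop :=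
  ∀ F : StrongDual ℝ (StrongDual ℝ X), ∃ y : Y, bidualOp v F = inclusionInDoubleDual ℝ Y y

section Bidual

variable {Z : Type*} [NormedAddCommGroup Z] [NormedSpace ℝ Z]

lemma bidualOp_add_apply (T v : X →L[ℝ] Y) (F : StrongDual ℝ (StrongDual ℝ X)) :
    bidualOp (T + v) F = bidualOp T F + bidualOp v F := by
  simp only [bidualOp, adjointOp, map_add]
  rfl

lemma bidualOp_comp (A : Y →L[ℝ] Z) (B : X →L[ℝ] Y) :
    bidualOp (A.comp B) = (bidualOp A).comp (bidualOp B) := rfl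

lemma bidualOp_inclusionInDoubleDual (A : X →L[ℝ] Y) (x : X) :
    bidualOp A (inclusionInDoubleDual ℝ X x) = inclusionInDoubleDual ℝ Y (A x) := rfl

lemma Tauberian.of_comp {A : Y →L[ℝ] Z} {B : X →L[ℝ] Y} (h : Tauberian (A.comp B)) :
    Tauberian B := by
  rintro F ⟨y, hy⟩
  exact h F ⟨A y, by rw [bidualOp_comp, ContinuousLinearMap.comp_apply, hy,
    bidualOp_inclusionInDoubleDual]⟩

lemma Tauberian.add_weaklyCompactOp {T v : X →L[ℝ] Y} (hT : Tauberian T)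
    (hv : WeaklyCompactOp v) : Tauberian (T + v) := by
  rintro F ⟨y, hy⟩
  obtain ⟨y', hy'⟩ := hv F
  refine hT F ⟨y - y', ?_⟩
  calc bidualOp T F = bidualOp (T + v) F - bidualOp v F := by
        rw [bidualOp_add_apply]
        exact (add_sub_cancel_right (bidualOp T F) (bidualOp v F)).symm
    _ = inclusionInDoubleDual ℝ Y (y - y') := by rw [hy, hy', map_sub]

end Bidual

theorem stmt10_general {Z : Type*} [NormedAddCommGroup Z] [NormedSpace ℝ Z]
    (T : X →L[ℝ] Y) (hT : Tauberian T) (u : X →L[ℝ] Z) :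
    (∀ T₁ : X →L[ℝ] WithLp 1 (Y × Z),
      (∀ x, T₁ x = (WithLp.equiv 1 (Y × Z)).symm (T x, u x)) → Tauberian T₁) ∧
    (∀ v : X →L[ℝ] Y, WeaklyCompactOp v → Tauberian (T + v)) := by
  refine ⟨fun T₁ hT₁ => ?_, fun v hv => hT.add_weaklyCompactOp hv⟩
  have hT_eq : (WithLp.fstL 1 ℝ Y Z).comp T₁ = T := by
    ext x
    simp [hT₁ x]
  exact Tauberian.of_comp (A := WithLp.fstL 1 ℝ Y Z) (hT_eq ▸ hT)

/-- If `T : X → Y` is Tauberian and `u : X → Z` is weakly compact, then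
`T₁ x = (Tx, ux) : X → Y ⊕₁ Z` is Tauberian; in particular `T + v` is Tauberian for any
weakly compact `v : X → Y`. -/
theorem stmt10 {Z : Type*} [NormedAddCommGroup Z] [NormedSpace ℝ Z]
    [CompleteSpace X] [CompleteSpace Y] [CompleteSpace Z]
    (T : X →L[ℝ] Y) (hT : Tauberian T) (u : X →L[ℝ] Z) (hu : WeaklyCompactOp u) :
    (∀ T₁ : X →L[ℝ] WithLp 1 (Y × Z),
      (∀ x, T₁ x = (WithLp.equiv 1 (Y × Z)).symm (T x, u x)) → Tauberian T₁) ∧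
    (∀ v : X →L[ℝ] Y, WeaklyCompactOp v → Tauberian (T + v)) :=
  stmt10_general T hT u
end
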